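/- arXiv:2109.08760 — 4 statements merged into one kernel-verified Lean document; each statement's English description precedes it below -/
import Mathlib

section
/- Let n, p ≥ 1 be integers, r > 0 a real number, and a ∈ ℝ. Let f = (f_1, …, f_p) : B^n(0,r) → ℝ^p be a C^∞ mapping on the open ball B^n(0,r) = {x ∈ ℝ^n : ‖x‖ < r} whose p-th component is f_p(x) = (1/2)·∑_{i=1}^n x_i² + a. If g = (g_1, …, g_p) : B^n(0,r) → ℝ^p is a C^∞ mapping such that for every x ∈ B^n(0,r) the Euclidean norm of the vector (∂f_p/∂x_1(x) − ∂g_p/∂x_1(x), …, ∂f_p/∂x_n(x) − ∂g_p/∂x_n(x)) is strictly less than r/2, then there exists a critical point of g in B^n(0,r), i.e., a point x₀ ∈ B^n(0,r) at which the rank of the derivative Dg(x₀) is strictly less than p. -/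
set_option maxHeartbeats 1000000
open Metric

theorem aux_hasFDerivAt (n : ℕ) (a : ℝ) (x : EuclideanSpace ℝ (Fin n)) :
    HasFDerivAt (fun y : EuclideanSpace ℝ (Fin n) => (1:ℝ)/2 * ∑ i, (y i)^2 + a)
      (∑ j, x j • (EuclideanSpace.proj j : EuclideanSpace ℝ (Fin n) →L[ℝ] ℝ)) x := by
  have h1 : ∀ j : Fin n, HasFDerivAt (fun y : EuclideanSpace ℝ (Fin n) => (y j)^2)
      ((2 * x j) • (EuclideanSpace.proj j : EuclideanSpace ℝ (Fin n) →L[ℝ] ℝ)) x := by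
    intro j
    have h := (EuclideanSpace.proj j : EuclideanSpace ℝ (Fin n) →L[ℝ] ℝ).hasFDerivAt (x := x)
    have h2 := h.mul h
    simp only [PiLp.proj_apply] at h2
    have hfun : (fun y : EuclideanSpace ℝ (Fin n) => (y j)^2) = fun y => y j * y j := by
      ext y; ring
    have hder : ((2:ℝ) * x j) • (EuclideanSpace.proj j : EuclideanSpace ℝ (Fin n) →L[ℝ] ℝ)
        = x j • EuclideanSpace.proj j + x j • EuclideanSpace.proj j := by
      rw [two_mul, add_smul]
    rw [hfun, hder]; exact h2
  have hsum := HasFDerivAt.fun_sum (fun j (_ : j ∈ Finset.univ) => h1 j)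
  have h3 := (hsum.const_mul ((1:ℝ)/2)).add_const a
  have hder2 : ((1:ℝ)/2) • (∑ j, ((2:ℝ) * x j) • (EuclideanSpace.proj j : EuclideanSpace ℝ (Fin n) →L[ℝ] ℝ))
      = ∑ j, x j • (EuclideanSpace.proj j : EuclideanSpace ℝ (Fin n) →L[ℝ] ℝ) := by
    rw [Finset.smul_sum]
    apply Finset.sum_congr rfl
    intro j _
    rw [smul_smul, show (1:ℝ)/2 * (2 * x j) = x j by ring]
  rw [← hder2]; exact h3

theorem aux_rank_lt (n p : ℕ)
    (D : EuclideanSpace ℝ (Fin n) →L[ℝ] EuclideanSpace ℝ (Fin p)) (idx : Fin p)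
    (h : ∀ v, D v idx = 0) :
    LinearMap.rank D.toLinearMap < (p : Cardinal) := by
  set K : Submodule ℝ (EuclideanSpace ℝ (Fin p)) :=
    LinearMap.ker (EuclideanSpace.projₗ idx : EuclideanSpace ℝ (Fin p) →ₗ[ℝ] ℝ)
  have hle : LinearMap.range D.toLinearMap ≤ K := by
    rintro y ⟨v, rfl⟩
    simpa [K] using h v
  have hK : K ≠ ⊤ := by
    intro htop
    have : EuclideanSpace.single idx (1:ℝ) ∈ K := htop ▸ Submodule.mem_top
    simp [K, EuclideanSpace.single_apply] at this
  calc LinearMap.rank D.toLinearMap ≤ Module.rank ℝ K := Submodule.rank_mono hle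
    _ = (Module.finrank ℝ K : Cardinal) := (Module.finrank_eq_rank ℝ K).symm
    _ < (p : Cardinal) := by
        rw [Nat.cast_lt]
        have := Submodule.finrank_lt hK
        simpa [finrank_euclideanSpace] using this

/-- the paper's critical-point lemma, Lemma `thm:critical`.
If the `p`-th component of `f : B^n(0,r) → ℝ^p` is `x ↦ (1/2) ∑ xᵢ² + a` and the
gradient of the `p`-th component of `g` is everywhere `r/2`-close to that of `f`
on the ball, then `g` has a critical point in `B^n(0,r)`. -/
theorem exists_critical_point_of_close_gradient
    (n p : ℕ) (hn : 1 ≤ n) (hp : 1 ≤ p) (r : ℝ) (hr : 0 < r) (a : ℝ)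
    (f g : EuclideanSpace ℝ (Fin n) → EuclideanSpace ℝ (Fin p))
    (hf : ContDiffOn ℝ (⊤ : ℕ∞) f (ball 0 r))
    (hg : ContDiffOn ℝ (⊤ : ℕ∞) g (ball 0 r))
    (hfp : ∀ x ∈ ball (0 : EuclideanSpace ℝ (Fin n)) r,
      f x ⟨p - 1, by omega⟩ = (1 / 2) * ∑ i, (x i) ^ 2 + a)
    (hclose : ∀ x ∈ ball (0 : EuclideanSpace ℝ (Fin n)) r,
      Real.sqrt (∑ i : Fin n,
        (fderiv ℝ (fun y => f y ⟨p - 1, by omega⟩) x (EuclideanSpace.single i 1)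
          - fderiv ℝ (fun y => g y ⟨p - 1, by omega⟩) x (EuclideanSpace.single i 1)) ^ 2)
        < r / 2) :
    ∃ x₀ ∈ ball (0 : EuclideanSpace ℝ (Fin n)) r,
      LinearMap.rank (fderiv ℝ g x₀).toLinearMap < (p : Cardinal) := by
  set idx : Fin p := ⟨p - 1, by omega⟩ with hidx
  set gp : EuclideanSpace ℝ (Fin n) → ℝ := fun x => g x idx with hgpdef
  set s : ℝ := 3 * r / 4 with hs
  have hs0 : 0 ≤ s := by positivity
  have hsr : s < r := by rw [hs]; linarith
  have hsub : closedBall (0 : EuclideanSpace ℝ (Fin n)) s ⊆ ball 0 r := by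
    intro x hx
    exact lt_of_le_of_lt (mem_closedBall_zero_iff.1 hx) hsr |> mem_ball_zero_iff.2
  -- differentiability of g at points of the ball
  have hgd : ∀ x ∈ ball (0 : EuclideanSpace ℝ (Fin n)) r, DifferentiableAt ℝ g x := by
    intro x hx
    exact ((hg.differentiableOn (by simp)).differentiableAt (isOpen_ball.mem_nhds hx))
  have hgpfd : ∀ x ∈ ball (0 : EuclideanSpace ℝ (Fin n)) r,
      HasFDerivAt gp ((EuclideanSpace.proj idx : EuclideanSpace ℝ (Fin p) →L[ℝ] ℝ).comp
        (fderiv ℝ g x)) x := by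
    intro x hx
    exact (EuclideanSpace.proj idx : EuclideanSpace ℝ (Fin p) →L[ℝ] ℝ).hasFDerivAt.comp x
      (hgd x hx).hasFDerivAt
  -- fderiv of the p-th component of f
  have hfderiv : ∀ x ∈ ball (0 : EuclideanSpace ℝ (Fin n)) r, ∀ i : Fin n,
      fderiv ℝ (fun y => f y idx) x (EuclideanSpace.single i 1) = x i := by
    intro x hx i
    have heq : (fun y => f y idx) =ᶠ[nhds x]
        (fun y : EuclideanSpace ℝ (Fin n) => (1:ℝ)/2 * ∑ i, (y i)^2 + a) := by
      filter_upwards [isOpen_ball.mem_nhds hx] with y hy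
      simpa using hfp y hy
    rw [heq.fderiv_eq, (aux_hasFDerivAt n a x).fderiv]
    simp [ContinuousLinearMap.sum_apply, EuclideanSpace.single_apply]
  -- the gradient estimate for gp
  have key : ∀ x ∈ ball (0 : EuclideanSpace ℝ (Fin n)) r,
      Real.sqrt (∑ i : Fin n, (x i - fderiv ℝ gp x (EuclideanSpace.single i 1)) ^ 2) < r / 2 := by
    intro x hx
    have h1 := hclose x hx
    have h2 : ∀ i : Fin n,
        fderiv ℝ (fun y => f y ⟨p - 1, by omega⟩) x (EuclideanSpace.single i 1)
          - fderiv ℝ (fun y => g y ⟨p - 1, by omega⟩) x (EuclideanSpace.single i 1)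
        = x i - fderiv ℝ gp x (EuclideanSpace.single i 1) := by
      intro i
      rw [hfderiv x hx i]
    rw [Finset.sum_congr rfl (fun i _ => by rw [h2 i])] at h1
    exact h1
  -- minimize gp on the closed ball
  obtain ⟨x₀, hx₀K, hmin⟩ : ∃ x₀ ∈ closedBall (0 : EuclideanSpace ℝ (Fin n)) s,
      IsMinOn gp (closedBall 0 s) x₀ := by
    refine (isCompact_closedBall 0 s).exists_isMinOn ⟨0, mem_closedBall_self hs0⟩ ?_
    exact ((EuclideanSpace.proj idx : EuclideanSpace ℝ (Fin p) →L[ℝ] ℝ).continuous.comp_continuousOn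
      (hg.continuousOn)).mono hsub
  have hx₀ball : x₀ ∈ ball (0 : EuclideanSpace ℝ (Fin n)) r := hsub hx₀K
  set L : EuclideanSpace ℝ (Fin n) →L[ℝ] ℝ :=
    (EuclideanSpace.proj idx : EuclideanSpace ℝ (Fin p) →L[ℝ] ℝ).comp (fderiv ℝ g x₀) with hL
  have hLf : HasFDerivAt gp L x₀ := hgpfd x₀ hx₀ball
  have hfgp : fderiv ℝ gp x₀ = L := hLf.fderiv
  -- the derivative at x₀ in direction -x₀ is nonneg (tangent cone)
  have htc : -x₀ ∈ posTangentConeAt (closedBall (0 : EuclideanSpace ℝ (Fin n)) s) x₀ := by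
    have hseg : segment ℝ x₀ 0 ⊆ closedBall (0 : EuclideanSpace ℝ (Fin n)) s :=
      (convex_closedBall _ _).segment_subset hx₀K (mem_closedBall_self hs0)
    simpa using sub_mem_posTangentConeAt_of_segment_subset hseg
  have hnonneg : 0 ≤ L (-x₀) :=
    hmin.localize.hasFDerivWithinAt_nonneg hLf.hasFDerivWithinAt htc
  have hLx₀ : L x₀ ≤ 0 := by
    have := hnonneg
    rw [map_neg] at this
    linarith
  -- lower bound for L x₀
  set N : ℝ := Real.sqrt (∑ i : Fin n, (x₀ i) ^ 2) with hN
  set W : ℝ := Real.sqrt (∑ i : Fin n, (x₀ i - L (EuclideanSpace.single i 1)) ^ 2) with hW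
  have hWr : W < r / 2 := by
    have := key x₀ hx₀ball
    rwa [hfgp] at this
  have hN0 : 0 ≤ N := Real.sqrt_nonneg _
  have hW0 : 0 ≤ W := Real.sqrt_nonneg _
  -- decomposition: L x₀ = ∑ i, x₀ i * L (e i)
  have hdecomp : L x₀ = ∑ i : Fin n, x₀ i * L (EuclideanSpace.single i 1) := by
    have hx : x₀ = ∑ i : Fin n, x₀ i • EuclideanSpace.single i (1:ℝ) := by
      have := (EuclideanSpace.basisFun (Fin n) ℝ).sum_repr x₀
      simp only [EuclideanSpace.basisFun_apply, EuclideanSpace.basisFun_repr] at this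
      exact this.symm
    conv_lhs => rw [hx]
    rw [map_sum]
    simp [ContinuousLinearMap.map_smul, smul_eq_mul]
  -- Cauchy–Schwarz
  have hCS : ∑ i : Fin n, x₀ i * (x₀ i - L (EuclideanSpace.single i 1)) ≤ N * W := by
    have h := Finset.sum_mul_sq_le_sq_mul_sq Finset.univ (fun i => x₀ i)
      (fun i => x₀ i - L (EuclideanSpace.single i 1))
    have h2 : (∑ i : Fin n, x₀ i * (x₀ i - L (EuclideanSpace.single i 1)))^2 ≤ (N * W)^2 := by
      rw [mul_pow, hN, hW, Real.sq_sqrt (by positivity), Real.sq_sqrt (by positivity)]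
      exact h
    calc ∑ i : Fin n, x₀ i * (x₀ i - L (EuclideanSpace.single i 1))
        ≤ |∑ i : Fin n, x₀ i * (x₀ i - L (EuclideanSpace.single i 1))| := le_abs_self _
      _ = Real.sqrt ((∑ i : Fin n, x₀ i * (x₀ i - L (EuclideanSpace.single i 1)))^2) :=
          (Real.sqrt_sq_eq_abs _).symm
      _ ≤ Real.sqrt ((N * W)^2) := Real.sqrt_le_sqrt h2
      _ = N * W := Real.sqrt_sq (by positivity)
  have hsum_sq : ∑ i : Fin n, (x₀ i) * (x₀ i) = N ^ 2 := by
    rw [hN, Real.sq_sqrt (by positivity)]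
    exact Finset.sum_congr rfl (fun i _ => (pow_two (x₀ i)).symm)
  have hlower : N ^ 2 - N * W ≤ L x₀ := by
    rw [hdecomp]
    have : ∑ i : Fin n, x₀ i * L (EuclideanSpace.single i 1)
        = ∑ i : Fin n, (x₀ i * x₀ i - x₀ i * (x₀ i - L (EuclideanSpace.single i 1))) := by
      apply Finset.sum_congr rfl; intro i _; ring
    rw [this, Finset.sum_sub_distrib, hsum_sq]
    linarith [hCS]
  -- conclude N ≤ W
  have hNW : N ≤ W := by
    by_contra hlt
    push_neg at hlt
    have hNpos : 0 < N := lt_of_le_of_lt hW0 hlt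
    nlinarith [hlower, hLx₀]
  -- x₀ is interior: ‖x₀‖ = N < r/2 < s
  have hnorm : ‖x₀‖ = N := by
    rw [EuclideanSpace.norm_eq, hN]
    congr 1
    exact Finset.sum_congr rfl (fun i _ => by rw [Real.norm_eq_abs, sq_abs])
  have hint : ‖x₀‖ < s := by
    rw [hnorm]
    calc N ≤ W := hNW
      _ < r / 2 := hWr
      _ < s := by rw [hs]; linarith
  -- hence local min, fderiv gp x₀ = 0
  have hlocmin : IsLocalMin gp x₀ := by
    apply hmin.isLocalMin
    exact closedBall_mem_nhds_of_mem (by rwa [mem_ball_zero_iff])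
  have hzero : fderiv ℝ gp x₀ = 0 := hlocmin.fderiv_eq_zero
  rw [hfgp] at hzero
  refine ⟨x₀, hx₀ball, aux_rank_lt n p (fderiv ℝ g x₀) idx ?_⟩
  intro v
  have := congrFun (congrArg DFunLike.coe hzero) v
  simpa [hL] using this
end

section
/- Let n ≥ 1 be an integer and r > 0 a real number. Let φ : B^n(0,r) → ℝ be a continuously differentiable function on the open ball B^n(0,r) such that for every x ∈ B^n(0,r) one has ‖x − ∇φ(x)‖ < r/2, where ∇φ(x) = (∂φ/∂x_1(x), …, ∂φ/∂x_n(x)) denotes the gradient. Then there exists a point x₀ in the closed ball {x ∈ ℝ^n : ‖x‖ ≤ r/2} with ∇φ(x₀) = 0. -/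
open Metric
open scoped RealInnerProductSpace

/-- the fixed-point step of the paper's critical-point lemma.
If `φ` is `C¹` on `B^n(0,r)` and `‖x - ∇φ(x)‖ < r/2` on the ball, then `∇φ`
vanishes at some point of the closed ball of radius `r/2`. -/
theorem exists_gradient_zero_of_displacement_small
    (n : ℕ) (hn : 1 ≤ n) (r : ℝ) (hr : 0 < r)
    (φ : EuclideanSpace ℝ (Fin n) → ℝ)
    (hφ : ContDiffOn ℝ 1 φ (ball 0 r))
    (hgrad : ∀ x ∈ ball (0 : EuclideanSpace ℝ (Fin n)) r,
      ‖x - gradient φ x‖ < r / 2) :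
    ∃ x₀ ∈ closedBall (0 : EuclideanSpace ℝ (Fin n)) (r / 2),
      gradient φ x₀ = 0 := by
  have hsub : closedBall (0 : EuclideanSpace ℝ (Fin n)) (r / 2) ⊆ ball 0 r := by
    apply closedBall_subset_ball; linarith
  -- φ is continuous on the closed ball
  have hcont : ContinuousOn φ (closedBall (0 : EuclideanSpace ℝ (Fin n)) (r / 2)) :=
    (hφ.continuousOn).mono hsub
  obtain ⟨x₀, hx₀mem, hmin⟩ :=
    (isCompact_closedBall (0 : EuclideanSpace ℝ (Fin n)) (r / 2)).exists_isMinOn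
      (nonempty_closedBall.mpr (by linarith)) hcont
  refine ⟨x₀, hx₀mem, ?_⟩
  have hx₀ball : x₀ ∈ ball (0 : EuclideanSpace ℝ (Fin n)) r := hsub hx₀mem
  have hdiff : DifferentiableAt ℝ φ x₀ :=
    (hφ.differentiableOn one_ne_zero).differentiableAt (isOpen_ball.mem_nhds hx₀ball)
  by_contra hg
  set g := gradient φ x₀ with hgdef
  have hgrad₀ : HasGradientAt φ g x₀ := hdiff.hasGradientAt
  rcases lt_or_eq_of_le (mem_closedBall_zero_iff.mp hx₀mem) with hlt | heq
  · -- interior case: local min, gradient zero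
    have hloc : IsLocalMin φ x₀ :=
      hmin.isLocalMin (closedBall_mem_nhds_of_mem (by simpa using hlt))
    exact hg (by
      rw [hgdef, gradient, hloc.fderiv_eq_zero, map_zero])
  · -- boundary case
    have hkey := hgrad x₀ hx₀ball
    have hipos : (0 : ℝ) < ⟪x₀, g⟫ := by
      have hgn : (0 : ℝ) < ‖g‖ := norm_pos_iff.mpr hg
      have h2 : ‖x₀ - g‖ < r / 2 := hkey
      have h1 : ‖x₀ - g‖ ^ 2 < (r / 2) ^ 2 := by
        nlinarith [norm_nonneg (x₀ - g)]
      rw [norm_sub_sq_real] at h1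
      nlinarith
    -- consider ψ t = φ ((1 - t) • x₀)
    set f : ℝ → EuclideanSpace ℝ (Fin n) := fun t => x₀ - t • x₀ with hf
    have hfderiv : HasDerivAt f (-x₀) 0 := by
      have : HasDerivAt (fun t : ℝ => t • x₀) x₀ 0 := by
        simpa using (hasDerivAt_id (0:ℝ)).smul_const x₀
      simpa using this.const_sub x₀
    have hf0 : f 0 = x₀ := by simp [hf]
    have hcomp : HasDerivAt (φ ∘ f) (-(⟪x₀, g⟫)) 0 := by
      have := (hf0 ▸ hgrad₀.hasFDerivAt).comp_hasDerivAt 0 hfderiv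
      simpa [InnerProductSpace.toDual_apply_apply, inner_neg_right, real_inner_comm, mul_comm] using this
    -- slope argument: for small t > 0, φ (f t) < φ x₀
    have hslope := hasDerivAt_iff_tendsto_slope.mp hcomp
    have hneg : (-(⟪x₀, g⟫)) < 0 := by linarith
    have hev : ∀ᶠ t in nhdsWithin (0:ℝ) {(0:ℝ)}ᶜ, slope (φ ∘ f) 0 t < 0 :=
      hslope (Iio_mem_nhds hneg)
    have hev2 : ∀ᶠ t in nhdsWithin (0:ℝ) (Set.Ioi 0), slope (φ ∘ f) 0 t < 0 :=
      nhdsWithin_mono 0 (fun t ht => ne_of_gt ht) hev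
    have hev3 : ∀ᶠ t in nhdsWithin (0:ℝ) (Set.Ioi 0), t < 1 ∧ 0 < t :=
      Filter.eventually_iff.mpr (by
        refine mem_nhdsWithin.mpr ⟨Set.Iio 1, isOpen_Iio, by norm_num, ?_⟩
        rintro t ⟨ht1, ht2⟩
        exact ⟨ht1, ht2⟩)
    obtain ⟨t, hts, ht1, ht0⟩ := (hev2.and hev3).exists
    have hft : f t ∈ closedBall (0 : EuclideanSpace ℝ (Fin n)) (r / 2) := by
      rw [mem_closedBall_zero_iff]
      have : f t = (1 - t) • x₀ := by
        simp [hf, sub_smul, one_smul]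
      rw [this, norm_smul]
      have : ‖(1 - t : ℝ)‖ ≤ 1 := by
        rw [Real.norm_eq_abs, abs_le]; constructor <;> linarith
      calc ‖(1 - t : ℝ)‖ * ‖x₀‖ ≤ 1 * ‖x₀‖ := by
            exact mul_le_mul_of_nonneg_right this (norm_nonneg _)
        _ = ‖x₀‖ := one_mul _
        _ ≤ r / 2 := mem_closedBall_zero_iff.mp hx₀mem
    have hlt : φ (f t) < φ x₀ := by
      have : slope (φ ∘ f) 0 t = (φ (f t) - φ x₀) / t := by
        simp [slope, hf0, Function.comp, div_eq_inv_mul]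
      rw [this] at hts
      have := (div_neg_iff.mp hts)
      rcases this with ⟨h1, h2⟩ | ⟨h1, h2⟩
      · linarith
      · linarith
    exact absurd (hmin hft) (not_le.mpr hlt)
end

section
/- Let N be a non-compact C^∞ manifold and let p ≥ 1 be an integer. Then there exists a C^∞ map f : N → ℝ^p such that the set of critical values of f is dense in ℝ^p and such that the restriction of f to its set Σ of critical points is not a proper map; more precisely, there is a sequence (q_α)_{α∈ℕ} of critical points of f that leaves every compact subset of N (i.e., each compact subset of N contains only finitely many of the q_α) while the set {f(q_α) : α ∈ ℕ} is dense in ℝ^p. -/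
open Metric
open scoped Manifold

/-!
Take a smooth exhaustion function `g : N → ℝ` and points `q n` of `N` whose values `g (q n)` tend
to infinity and are pairwise at distance at least `1`. A smooth `h : ℝ → ℝ^p` that is constant,
equal to the `n`-th term `y n` of a dense sequence, near each `g (q n)` gives `f = h ∘ g`, which is
locally constant near every `q n`. So each `q n` is a critical point with value `y n`, the `q n`
leave every compact set because `g` is bounded on it, and properness of `f` on the critical set
would force only finitely many `y n` to lie in the closed unit ball.
-/

open Filter Set Topology

theorem tendsto_cocompact_of_tendsto_comp_atTop {X ι : Type*} [TopologicalSpace X] {g : X → ℝ}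
    (hg : Continuous g) {q : ι → X} {l : Filter ι} (h : Tendsto (g ∘ q) l atTop) :
    Tendsto q l (cocompact X) := by
  refine hasBasis_cocompact.tendsto_right_iff.2 fun K hK => ?_
  obtain ⟨M, hM⟩ := (hK.image hg).bddAbove
  filter_upwards [h.eventually_gt_atTop M] with i hi hqi
  exact (hM (mem_image_of_mem g hqi)).not_gt hi

theorem DenseRange.infinite_preimage {X ι : Type*} [TopologicalSpace X] [T1Space X]
    [∀ x : X, NeBot (𝓝[≠] x)] {y : ι → X} (hy : DenseRange y) {U : Set X} (hU : IsOpen U)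
    (hne : U.Nonempty) : (y ⁻¹' U).Infinite := by
  intro hfin
  obtain ⟨_, hU', ⟨i, rfl⟩, hi⟩ := (hy.sdiff_finite (hfin.image y)).inter_open_nonempty U hU hne
  exact hi (mem_image_of_mem y hU')

theorem not_isProperMap_domRestrict {X Y ι : Type*} [TopologicalSpace X] [TopologicalSpace Y]
    {f : X → Y} {S : Set X} {q : ι → X} (hqS : ∀ i, q i ∈ S)
    (hq : ∀ K, IsCompact K → (q ⁻¹' K).Finite) {K : Set Y} (hK : IsCompact K)
    (hinf : (f ∘ q ⁻¹' K).Infinite) : ¬ IsProperMap (S.domRestrict f) := fun hf =>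
  hinf <| (hq _ ((hf.isCompact_preimage hK).image continuous_subtype_val)).subset
    fun i hi => ⟨⟨q i, hqS i⟩, hi, rfl⟩

theorem exists_seq_pairwise_one_le_dist_tendsto_atTop {X : Type*} (u : X → ℝ)
    (hu : ∀ M, ∃ x, M < u x) :
    ∃ q : ℕ → X, Pairwise (fun m n => 1 ≤ dist (u (q m)) (u (q n))) ∧
      Tendsto (u ∘ q) atTop atTop := by
  choose x hx using hu
  let q : ℕ → X := fun n => Nat.rec (x 0) (fun _ z => x (u z + 1)) n
  have hgrowth : ∀ m k : ℕ, u (q m) + k ≤ u (q (m + k)) := by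
    intro m k
    induction k with
    | zero => simp
    | succ k ih =>
      have : u (q (m + k)) + 1 < u (q (m + (k + 1))) := hx _
      push_cast
      linarith
  refine ⟨q, fun m n hmn => ?_, tendsto_atTop_mono (fun n => by simpa using hgrowth 0 n)
    (tendsto_atTop_add_const_left _ _ tendsto_natCast_atTop_atTop)⟩
  wlog hlt : m < n generalizing m n
  · rw [dist_comm]
    exact this n m hmn.symm (lt_of_le_of_ne (not_lt.1 hlt) hmn.symm)
  obtain ⟨k, rfl⟩ := Nat.exists_eq_add_of_lt hlt
  have : u (q m) + (k + 1 : ℕ) ≤ u (q (m + k + 1)) := hgrowth m (k + 1)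
  push_cast at this
  rw [Real.dist_eq, abs_sub_comm]
  exact le_trans (by linarith [k.cast_nonneg (α := ℝ)]) (le_abs_self _)

theorem exists_contDiff_eventuallyEq_const {ι F : Type*} [NormedAddCommGroup F] [NormedSpace ℝ F]
    {s : ι → ℝ} {r : ℝ} (hr : 0 < r) (hs : Pairwise fun i j => r ≤ dist (s i) (s j))
    (y : ι → F) : ∃ h : ℝ → F, ContDiff ℝ (⊤ : ℕ∞) h ∧ ∀ i, h =ᶠ[𝓝 (s i)] fun _ => y i := by
  have hnear : ∀ {x z : ℝ} {i j}, dist z x < r / 4 → dist x (s i) < r / 2 →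
      dist z (s j) ≤ r / 4 → i = j := fun {x z i j} hzx hxi hzj => by
    by_contra hij
    linarith [hs hij, dist_triangle4 (s i) x z (s j), dist_comm x (s i), dist_comm z x]
  obtain ⟨h, hh⟩ : ∃ h : C^(⊤ : ℕ∞)⟮𝓘(ℝ), ℝ; 𝓘(ℝ, F), F⟯,
      ∀ x, ∀ i, dist x (s i) ≤ r / 4 → h x = y i := by
    -- The `s i` being `r`-separated, a ball of radius `r / 4` meets at most one of the balls
    -- `closedBall (s i) (r / 4)`, so these convex constraints are locally satisfiable.
    refine exists_contMDiffMap_forall_mem_convex_of_local_const 𝓘(ℝ)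
      (t := fun x => {v | ∀ i, dist x (s i) ≤ r / 4 → v = y i}) ?_ fun x => ?_
    · intro x u hu v hv a b _ _ hab i hi
      rw [hu i hi, hv i hi, ← add_smul, hab, one_smul]
    by_cases hx : ∃ i, dist x (s i) < r / 2
    · obtain ⟨i, hi⟩ := hx
      refine ⟨y i, ?_⟩
      filter_upwards [ball_mem_nhds x (by positivity : 0 < r / 4)] with z hz j hj
      rw [hnear hz hi hj]
    · refine ⟨0, ?_⟩
      filter_upwards [ball_mem_nhds x (by positivity : 0 < r / 4)] with z hz j hj
      exact absurd ⟨j, by linarith [dist_triangle_left x (s j) z, mem_ball.1 hz]⟩ hx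
  refine ⟨h, contMDiff_iff_contDiff.1 h.contMDiff, fun i => ?_⟩
  filter_upwards [closedBall_mem_nhds (s i) (by positivity : 0 < r / 4)] with x hx
  exact hh x i hx

theorem mfderiv_eq_zero_of_eventuallyEq_const {𝕜 E H M E' H' M' : Type*}
    [NontriviallyNormedField 𝕜] [NormedAddCommGroup E] [NormedSpace 𝕜 E] [TopologicalSpace H]
    {I : ModelWithCorners 𝕜 E H} [TopologicalSpace M] [ChartedSpace H M]
    [NormedAddCommGroup E'] [NormedSpace 𝕜 E'] [TopologicalSpace H']
    {I' : ModelWithCorners 𝕜 E' H'} [TopologicalSpace M'] [ChartedSpace H' M']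
    {f : M → M'} {x : M} {c : M'} (hf : f =ᶠ[𝓝 x] fun _ => c) : mfderiv I I' f x = 0 := by
  rw [hf.mfderiv_eq]
  exact mfderiv_const

theorem exists_contMDiff_tendsto_cocompact_atTop {E H : Type*} [NormedAddCommGroup E]
    [NormedSpace ℝ E] [FiniteDimensional ℝ E] [TopologicalSpace H] (I : ModelWithCorners ℝ E H)
    (N : Type*) [TopologicalSpace N] [ChartedSpace H N] [IsManifold I (⊤ : ℕ∞) N] [T2Space N]
    [SigmaCompactSpace N] :
    ∃ g : N → ℝ, ContMDiff I 𝓘(ℝ) (⊤ : ℕ∞) g ∧ Tendsto g (cocompact N) atTop := by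
  have := Manifold.locallyCompact_of_finiteDimensional (M := N) I
  let K := CompactExhaustion.choice N
  obtain ⟨g, hg⟩ : ∃ g : C^(⊤ : ℕ∞)⟮I, N; 𝓘(ℝ), ℝ⟯, ∀ x, (K.find x : ℝ) < g x := by
    refine exists_contMDiffMap_forall_mem_convex_of_local_const I
      (t := fun x => Ioi (K.find x : ℝ)) (fun _ => convex_Ioi _) fun x => ⟨K.find x + 2, ?_⟩
    filter_upwards [mem_interior_iff_mem_nhds.1 (K.subset_interior_succ _ (K.mem_find x))]
      with z hz
    have : K.find z ≤ K.find x + 1 := K.mem_iff_find_le.1 hz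
    simp only [mem_Ioi]
    exact_mod_cast Nat.lt_add_one_of_le (by omega)
  refine ⟨g, g.contMDiff, tendsto_atTop.2 fun b => mem_cocompact'.2
    ⟨K ⌈b⌉₊, K.isCompact _, fun x hx => K.mem_iff_find_le.2 ?_⟩⟩
  have : (K.find x : ℝ) < ⌈b⌉₊ + 1 := by
    linarith [hg x, Nat.le_ceil b, show g x < b from not_le.1 hx]
  exact Nat.lt_add_one_iff.1 (by exact_mod_cast this)

theorem exists_smooth_map_with_dense_critical_values_not_proper_general
    {E : Type*} [NormedAddCommGroup E] [NormedSpace ℝ E] [FiniteDimensional ℝ E]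
    {H : Type*} [TopologicalSpace H] (I : ModelWithCorners ℝ E H)
    {N : Type*} [TopologicalSpace N] [ChartedSpace H N] [IsManifold I (⊤ : ℕ∞) N]
    [T2Space N] [SecondCountableTopology N] [NoncompactSpace N]
    (p : ℕ) (hp : 1 ≤ p) :
    ∃ f : N → EuclideanSpace ℝ (Fin p),
      ContMDiff I 𝓘(ℝ, EuclideanSpace ℝ (Fin p)) (⊤ : ℕ∞) f ∧
      Dense {y | ∃ q,
        LinearMap.rank (mfderiv I 𝓘(ℝ, EuclideanSpace ℝ (Fin p)) f q).toLinearMap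
          < (p : Cardinal) ∧ f q = y} ∧
      ¬ IsProperMap
        ({q | LinearMap.rank
            (mfderiv I 𝓘(ℝ, EuclideanSpace ℝ (Fin p)) f q).toLinearMap
          < (p : Cardinal)}.restrict f) ∧
      ∃ q : ℕ → N,
        (∀ α, LinearMap.rank
            (mfderiv I 𝓘(ℝ, EuclideanSpace ℝ (Fin p)) f (q α)).toLinearMap
          < (p : Cardinal)) ∧
        (∀ K : Set N, IsCompact K → {α | q α ∈ K}.Finite) ∧
        Dense (Set.range fun α => f (q α)) := by
  have := Manifold.locallyCompact_of_finiteDimensional (M := N) I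
  have := cocompact_neBot_iff.2 ‹NoncompactSpace N›
  have : Nontrivial (EuclideanSpace ℝ (Fin p)) :=
    Module.nontrivial_of_finrank_pos (R := ℝ) (by rw [finrank_euclideanSpace_fin]; omega)
  obtain ⟨g, hg, hg_top⟩ := exists_contMDiff_tendsto_cocompact_atTop I N
  obtain ⟨q, hq_sep, hq_top⟩ := exists_seq_pairwise_one_le_dist_tendsto_atTop g
    fun M => (hg_top.eventually_gt_atTop M).exists
  obtain ⟨y, hy⟩ := TopologicalSpace.exists_dense_seq (EuclideanSpace ℝ (Fin p))
  obtain ⟨h, hh, hh_const⟩ := exists_contDiff_eventuallyEq_const one_pos hq_sep y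
  have hf_const : ∀ n, h ∘ g =ᶠ[𝓝 (q n)] fun _ => y n :=
    fun n => hg.continuous.continuousAt.eventually (hh_const n)
  have hf_crit : ∀ n, LinearMap.rank
      (mfderiv I 𝓘(ℝ, EuclideanSpace ℝ (Fin p)) (h ∘ g) (q n)).toLinearMap < (p : Cardinal) := by
    intro n
    rw [mfderiv_eq_zero_of_eventuallyEq_const (hf_const n), ContinuousLinearMap.toLinearMap_zero,
      LinearMap.rank_zero]
    exact_mod_cast hp
  have hf_dense : DenseRange fun n => h (g (q n)) := by
    rwa [show (fun n => h (g (q n))) = y from funext fun n => (hf_const n).eq_of_nhds]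
  have hq_escape : ∀ K : Set N, IsCompact K → (q ⁻¹' K).Finite :=
    tendsto_cofinite_cocompact_iff.1 <| tendsto_cocompact_of_tendsto_comp_atTop hg.continuous <|
      Nat.cofinite_eq_atTop ▸ hq_top
  refine ⟨h ∘ g, hh.contMDiff.comp hg,
    hf_dense.mono (range_subset_iff.2 fun n => ⟨q n, hf_crit n, rfl⟩),
    not_isProperMap_domRestrict hf_crit hq_escape (isCompact_closedBall 0 1) ?_,
    q, hf_crit, hq_escape, hf_dense⟩
  exact (hf_dense.infinite_preimage isOpen_ball ⟨0, mem_ball_self one_pos⟩).mono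
    fun n hn => ball_subset_closedBall hn

/-- On a non-compact manifold `N` there is a smooth map
`f : N → ℝ^p` whose critical values are dense in `ℝ^p` and whose restriction to
its critical set is not proper: there is a sequence of critical points leaving
every compact set whose images are dense in `ℝ^p`. -/
theorem exists_smooth_map_with_dense_critical_values_not_proper
    {E : Type*} [NormedAddCommGroup E] [NormedSpace ℝ E] [FiniteDimensional ℝ E]
    {H : Type*} [TopologicalSpace H] (I : ModelWithCorners ℝ E H) [I.Boundaryless]
    {N : Type*} [TopologicalSpace N] [ChartedSpace H N] [IsManifold I (⊤ : ℕ∞) N]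
    [T2Space N] [SecondCountableTopology N] [NoncompactSpace N]
    (p : ℕ) (hp : 1 ≤ p) :
    ∃ f : N → EuclideanSpace ℝ (Fin p),
      ContMDiff I 𝓘(ℝ, EuclideanSpace ℝ (Fin p)) (⊤ : ℕ∞) f ∧
      Dense {y | ∃ q,
        LinearMap.rank (mfderiv I 𝓘(ℝ, EuclideanSpace ℝ (Fin p)) f q).toLinearMap
          < (p : Cardinal) ∧ f q = y} ∧
      ¬ IsProperMap
        ({q | LinearMap.rank
            (mfderiv I 𝓘(ℝ, EuclideanSpace ℝ (Fin p)) f q).toLinearMap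
          < (p : Cardinal)}.restrict f) ∧
      ∃ q : ℕ → N,
        (∀ α, LinearMap.rank
            (mfderiv I 𝓘(ℝ, EuclideanSpace ℝ (Fin p)) f (q α)).toLinearMap
          < (p : Cardinal)) ∧
        (∀ K : Set N, IsCompact K → {α | q α ∈ K}.Finite) ∧
        Dense (Set.range fun α => f (q α)) :=
  exists_smooth_map_with_dense_critical_values_not_proper_general I p hp
end

section
/- Let N be a C^∞ manifold, p ≥ 1 an integer, and g : N → ℝ^p a C^∞ map. Let q_1, …, q_{p+1} be p+1 distinct critical points of g, and let ρ_1, …, ρ_p : N → ℝ be C^∞ functions such that for all i ∈ {1,…,p}: (i) for each j ∈ {1,…,p}, ρ_i is constant on some open neighborhood of q_j with ρ_i(q_j) = δ_{ij} (the Kronecker delta); and (ii) ρ_i vanishes identically on some open neighborhood of q_{p+1}. Set c_i = g(q_{p+1}) − g(q_i) ∈ ℝ^p and define h : N → ℝ^p by h = g + ∑_{i=1}^p ρ_i · c_i. Then q_1, …, q_{p+1} are all critical points of h and h(q_1) = h(q_2) = ⋯ = h(q_{p+1}) = g(q_{p+1}); that is, h has p+1 distinct critical points that share the same critical value. -/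
/-! Near each `q j` the bumps are locally constant, so there `h` agrees with `g` plus the constant
vector `g (q (Fin.last p)) - g (q j)`. Adding a constant leaves the differential unchanged, so
`q j` stays critical, and it moves the value `g (q j)` to `g (q (Fin.last p))`. -/

open Filter Topology
open scoped Manifold

section AddConst

variable {𝕜 : Type*} [NontriviallyNormedField 𝕜]
  {E : Type*} [NormedAddCommGroup E] [NormedSpace 𝕜 E]
  {H : Type*} [TopologicalSpace H] {I : ModelWithCorners 𝕜 E H}
  {M : Type*} [TopologicalSpace M] [ChartedSpace H M]
  {E' : Type*} [NormedAddCommGroup E'] [NormedSpace 𝕜 E']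

theorem MDifferentiableAt.add_const {f : M → E'} {x : M} (hf : MDifferentiableAt I 𝓘(𝕜, E') f x)
    (c : E') : MDifferentiableAt I 𝓘(𝕜, E') (fun y => f y + c) x :=
  hf.add (mdifferentiableAt_const (c := c))

theorem mdifferentiableAt_add_const_iff {f : M → E'} {x : M} (c : E') :
    MDifferentiableAt I 𝓘(𝕜, E') (fun y => f y + c) x ↔ MDifferentiableAt I 𝓘(𝕜, E') f x :=
  ⟨fun hf => by simpa using hf.add_const (-c), fun hf => hf.add_const c⟩

theorem mfderiv_add_const (f : M → E') (x : M) (c : E') :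
    mfderiv I 𝓘(𝕜, E') (fun y => f y + c) x = mfderiv I 𝓘(𝕜, E') f x := by
  by_cases hf : MDifferentiableAt I 𝓘(𝕜, E') f x
  · exact ((hf.hasMFDerivAt.add (hasMFDerivAt_const c x)).congr_mfderiv (add_zero _)).mfderiv
  · rw [mfderiv_zero_of_not_mdifferentiableAt hf,
      mfderiv_zero_of_not_mdifferentiableAt (mt (mdifferentiableAt_add_const_iff c).1 hf)]
    rfl

end AddConst

theorem eventuallyEq_add_sum_smul_of_eventually_eq {X ι R V : Type*} [Fintype ι] [Semiring R]
    [AddCommMonoid V] [Module R V] {l : Filter X} {ρ : ι → X → R} {a : ι → R}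
    (hρ : ∀ i, ∀ᶠ x in l, ρ i x = a i) (g : X → V) (c : ι → V) :
    (fun x => g x + ∑ i, ρ i x • c i) =ᶠ[l] fun x => g x + ∑ i, a i • c i := by
  filter_upwards [eventually_all.2 hρ] with x hx
  simp only [hx]

theorem shifted_map_has_common_critical_value_general
    {E : Type*} [NormedAddCommGroup E] [NormedSpace ℝ E]
    {H : Type*} [TopologicalSpace H] (I : ModelWithCorners ℝ E H)
    {N : Type*} [TopologicalSpace N] [ChartedSpace H N]
    (p : ℕ)
    (g : N → EuclideanSpace ℝ (Fin p))
    (q : Fin (p + 1) → N)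
    (hcrit : ∀ j, LinearMap.rank
        (mfderiv I 𝓘(ℝ, EuclideanSpace ℝ (Fin p)) g (q j)).toLinearMap
      < (p : Cardinal))
    (ρ : Fin p → N → ℝ)
    (hρval : ∀ i j : Fin p, ∀ᶠ x in nhds (q j.castSucc),
      ρ i x = if i = j then 1 else 0)
    (hρlast : ∀ i, ∀ᶠ x in nhds (q (Fin.last p)), ρ i x = 0)
    (h : N → EuclideanSpace ℝ (Fin p))
    (hdef : ∀ x, h x = g x + ∑ i : Fin p,
      ρ i x • (g (q (Fin.last p)) - g (q i.castSucc))) :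
    (∀ j, LinearMap.rank
        (mfderiv I 𝓘(ℝ, EuclideanSpace ℝ (Fin p)) h (q j)).toLinearMap
      < (p : Cardinal)) ∧
    ∀ j, h (q j) = g (q (Fin.last p)) := by
  have hlocal : ∀ j, h =ᶠ[𝓝 (q j)] fun x => g x + (g (q (Fin.last p)) - g (q j)) := by
    rw [funext hdef]
    refine Fin.lastCases ?_ fun j => ?_
    · simpa using eventuallyEq_add_sum_smul_of_eventually_eq hρlast g _
    · simpa using eventuallyEq_add_sum_smul_of_eventually_eq (hρval · j) g _
  refine ⟨fun j => ?_, fun j => by simpa using (hlocal j).eq_of_nhds⟩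
  rw [(hlocal j).mfderiv_eq, mfderiv_add_const]
  exact hcrit j

/-- Given `p+1` distinct critical points `q₁, …, q_{p+1}` of a
smooth map `g : N → ℝ^p` and bump functions `ρ₁, …, ρ_p` which are locally
constant near every `q_j` with `ρ i (q j) = δ_{ij}` and vanish near `q_{p+1}`,
the map `h = g + ∑ i, ρ i • (g (q_{p+1}) - g (q i))` has `q₁, …, q_{p+1}` as
critical points sharing the common critical value `g (q_{p+1})`. -/
theorem shifted_map_has_common_critical_value
    {E : Type*} [NormedAddCommGroup E] [NormedSpace ℝ E]
    {H : Type*} [TopologicalSpace H] (I : ModelWithCorners ℝ E H) [I.Boundaryless]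
    {N : Type*} [TopologicalSpace N] [ChartedSpace H N] [IsManifold I (⊤ : ℕ∞) N]
    [T2Space N] [SecondCountableTopology N]
    (p : ℕ) (hp : 1 ≤ p)
    (g : N → EuclideanSpace ℝ (Fin p))
    (hg : ContMDiff I 𝓘(ℝ, EuclideanSpace ℝ (Fin p)) (⊤ : ℕ∞) g)
    (q : Fin (p + 1) → N) (hq : Function.Injective q)
    (hcrit : ∀ j, LinearMap.rank
        (mfderiv I 𝓘(ℝ, EuclideanSpace ℝ (Fin p)) g (q j)).toLinearMap
      < (p : Cardinal))
    (ρ : Fin p → N → ℝ)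
    (hρ : ∀ i, ContMDiff I 𝓘(ℝ, ℝ) (⊤ : ℕ∞) (ρ i))
    (hρval : ∀ i j : Fin p, ∀ᶠ x in nhds (q j.castSucc),
      ρ i x = if i = j then 1 else 0)
    (hρlast : ∀ i, ∀ᶠ x in nhds (q (Fin.last p)), ρ i x = 0)
    (h : N → EuclideanSpace ℝ (Fin p))
    (hdef : ∀ x, h x = g x + ∑ i : Fin p,
      ρ i x • (g (q (Fin.last p)) - g (q i.castSucc))) :
    (∀ j, LinearMap.rank
        (mfderiv I 𝓘(ℝ, EuclideanSpace ℝ (Fin p)) h (q j)).toLinearMap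
      < (p : Cardinal)) ∧
    ∀ j, h (q j) = g (q (Fin.last p)) :=
  shifted_map_has_common_critical_value_general I p g q hcrit ρ hρval hρlast h hdef
end
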